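/- Let (B_t)_{t∈G} be a concrete Fell bundle over a group G in a C*-algebra L. For r, s ∈ G set J_{r,s} := (B_r⋅B_s)⋅(B_r⋅B_s)*. Then B_r⋅B_s = J_{r,s}⋅B_{rs} = B_{rs}⋅J_{s⁻¹,r⁻¹}, where J_{s⁻¹,r⁻¹} = (B_{s⁻¹}⋅B_{r⁻¹})⋅(B_{s⁻¹}⋅B_{r⁻¹})*. -/

import Mathlib

/-- The closed linear span (over `ℂ`) of a set in a normed `ℂ`-algebra. -/
noncomputable def closedSpan {L : Type*} [NormedRing L] [NormedAlgebra ℂ L]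
    (S : Set L) : Submodule ℂ L :=
  (Submodule.span ℂ S).topologicalClosure

/-- `S⋅T`: the closed linear span of all products `s * t` with `s ∈ S`, `t ∈ T`. -/
noncomputable def mulSpan {L : Type*} [NormedRing L] [NormedAlgebra ℂ L]
    (S T : Set L) : Submodule ℂ L :=
  closedSpan (Set.image2 (· * ·) S T)


/-!
The inclusions `J r s ⋅ B (r*s) ⊆ B r ⋅ B s` and `B (r*s) ⋅ J s⁻¹ r⁻¹ ⊆ B r ⋅ B s` are algebraic:
`(B r ⋅ B s)* ⋅ B (r*s)` and `B (r*s) ⋅ (B s⁻¹ ⋅ B r⁻¹)` lie in the unit fibre `B 1`, which acts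
on `B r ⋅ B s` from both sides.

For the reverse inclusions, every element `x` of a C*-algebra is a limit of `x (x*x) cₙ` with `cₙ`
polynomials in `a = x*x`: for `b = a / K` with `K > ‖a‖`, take `a cₙ = 1 - (1 - b)ⁿ` (a geometric
sum); then `‖x (1 - b)ⁿ‖² = ‖(1 - b)ⁿ a (1 - b)ⁿ‖ ≤ sup_{0 ≤ t ≤ K} t (1 - t/K)²ⁿ ≤ K / (2n + 1)`.
For `x ∈ B r ⋅ B s` the approximants `x (x*x) c = (x x*)(x c) = (x c)(x*x)` lie in
`J r s ⋅ B (r*s)` and in `B (r*s) ⋅ J s⁻¹ r⁻¹`.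
-/

open Filter Topology

theorem succ_mul_mul_one_sub_pow_le_one {s : ℝ} (hs₀ : 0 ≤ s) (hs₁ : s ≤ 1) (m : ℕ) :
    (m + 1) * s * (1 - s) ^ m ≤ 1 :=
  calc (m + 1) * s * (1 - s) ^ m ≤ (1 + m * s) * (1 - s) ^ m := by
        gcongr
        nlinarith
    _ ≤ (1 + s) ^ m * (1 - s) ^ m := by
        gcongr
        exact one_add_mul_le_pow (by linarith) m
    _ = (1 - s ^ 2) ^ m := by rw [← mul_pow]; ring
    _ ≤ 1 := pow_le_one₀ (by nlinarith) (by nlinarith)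

theorem Submodule.mul_mem_of_mem_adjoin_singleton {R A : Type*} [CommSemiring R] [Semiring A]
    [Algebra R A] (M : Submodule R A) {a m c : A} (ha : ∀ y ∈ M, y * a ∈ M) (hm : m ∈ M)
    (hc : c ∈ Algebra.adjoin R {a}) : m * c ∈ M := by
  induction hc using Algebra.adjoin_induction generalizing m with
  | mem x hx => exact Set.mem_singleton_iff.mp hx ▸ ha m hm
  | algebraMap r => rw [← Algebra.commutes, ← Algebra.smul_def]; exact M.smul_mem r hm
  | add x y _ _ hx hy => rw [mul_add]; exact M.add_mem (hx hm) (hy hm)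
  | mul x y _ _ hx hy => rw [← mul_assoc]; exact hy (hx hm)

namespace CStarAlgebra

variable {A : Type*} [CStarAlgebra A]

theorem norm_mul_one_sub_smul_pow_sq_le (x : A) {K : ℝ} (hK₀ : 0 < K) (hK : ‖star x * x‖ ≤ K)
    (n : ℕ) : ‖x * (1 - K⁻¹ • (star x * x)) ^ n‖ ^ 2 ≤ K / (2 * n + 1) := by
  obtain _ | _ := subsingleton_or_nontrivial A
  · rw [Subsingleton.elim (x * _) 0, norm_zero, sq, zero_mul]
    positivity
  set a := star x * x
  set y := (1 - K⁻¹ • a) ^ n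
  have hy : y = cfc (fun t : ℝ => (1 - K⁻¹ * t) ^ n) a := by
    rw [cfc_pow _ n a, cfc_sub _ _ a, cfc_const_one ℝ a, cfc_const_mul _ _ a, cfc_id' ℝ a]
  have hyay : star y * a * y =
      cfc (fun t : ℝ => (1 - K⁻¹ * t) ^ n * t * (1 - K⁻¹ * t) ^ n) a := by
    have hy_sa : IsSelfAdjoint y := hy ▸ IsSelfAdjoint.cfc
    rw [cfc_mul _ _ a, cfc_mul _ _ a, cfc_id' ℝ a, ← hy, hy_sa.star_eq]
  calc ‖x * y‖ ^ 2 = ‖star y * a * y‖ := by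
        rw [sq, ← CStarRing.norm_star_mul_self, star_mul, mul_assoc, mul_assoc, mul_assoc]
    _ ≤ K / (2 * n + 1) := by
      rw [hyay]
      refine norm_cfc_le (by positivity) fun t ht => ?_
      have ht₀ : 0 ≤ t := spectrum_star_mul_self_nonneg t ht
      have htK : t ≤ K := (Real.le_norm_self t).trans ((spectrum.norm_le_norm_of_mem ht).trans hK)
      have hs₁ : K⁻¹ * t ≤ 1 := by rwa [inv_mul_le_one₀ hK₀]
      have hs := succ_mul_mul_one_sub_pow_le_one (by positivity) hs₁ (2 * n)
      rw [Real.norm_eq_abs, abs_of_nonneg (by positivity), le_div_iff₀ (by positivity)]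
      calc (1 - K⁻¹ * t) ^ n * t * (1 - K⁻¹ * t) ^ n * (2 * n + 1)
          = K * (((2 * n : ℕ) + 1) * (K⁻¹ * t) * (1 - K⁻¹ * t) ^ (2 * n)) := by
            field_simp; push_cast; ring
        _ ≤ K := mul_le_of_le_one_right hK₀.le hs

theorem tendsto_mul_one_sub_smul_pow (x : A) {K : ℝ} (hK₀ : 0 < K) (hK : ‖star x * x‖ ≤ K) :
    Tendsto (fun n : ℕ => x * (1 - K⁻¹ • (star x * x)) ^ n) atTop (𝓝 0) := by
  have hsq : Tendsto (fun n : ℕ => ‖x * (1 - K⁻¹ • (star x * x)) ^ n‖ ^ 2) atTop (𝓝 0) :=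
    squeeze_zero (fun _ => by positivity) (norm_mul_one_sub_smul_pow_sq_le x hK₀ hK) <|
      tendsto_const_nhds.div_atTop <| tendsto_atTop_add_const_right _ _ <|
        tendsto_natCast_atTop_atTop.const_mul_atTop two_pos
  rw [tendsto_zero_iff_norm_tendsto_zero]
  simpa [Function.comp_def, Real.sqrt_sq (norm_nonneg _)] using
    (Real.continuous_sqrt.tendsto 0).comp hsq

theorem mem_of_forall_mul_star_mul_self_mul_mem {N : Set A} (hN : IsClosed N) {x : A}
    (h : ∀ c ∈ Algebra.adjoin ℂ {star x * x}, x * (star x * x * c) ∈ N) : x ∈ N := by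
  set a := star x * x
  set K := ‖a‖ + 1
  set b := K⁻¹ • a
  have real_smul_mem : ∀ (r : ℝ) {z}, z ∈ Algebra.adjoin ℂ {a} → r • z ∈ Algebra.adjoin ℂ {a} :=
    fun r z hz => by rw [← Complex.coe_smul]; exact Subalgebra.smul_mem _ hz _
  let c : ℕ → A := fun n => K⁻¹ • ∑ k ∈ Finset.range n, (1 - b) ^ k
  have hc : ∀ n, c n ∈ Algebra.adjoin ℂ {a} := fun n =>
    real_smul_mem _ <| Subalgebra.sum_mem _ fun k _ => Subalgebra.pow_mem _
      (Subalgebra.sub_mem _ (Subalgebra.one_mem _)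
        (real_smul_mem _ (Algebra.subset_adjoin rfl))) k
  have hac : ∀ n, a * c n = 1 - (1 - b) ^ n := fun n => by
    rw [mul_smul_comm, ← smul_mul_assoc, ← mul_neg_geom_sum, sub_sub_cancel]
  have hlim : Tendsto (fun n => x * (a * c n)) atTop (𝓝 x) := by
    simpa [hac, mul_sub] using (tendsto_const_nhds (x := x)).sub
      (tendsto_mul_one_sub_smul_pow x (by positivity) (le_add_of_nonneg_right zero_le_one))
  exact hN.mem_of_tendsto hlim (Eventually.of_forall fun n => h _ (hc n))

end CStarAlgebra

section ClosedSpan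

variable {L : Type*} [NormedRing L] [NormedAlgebra ℂ L]

theorem subset_closedSpan (S : Set L) : S ⊆ closedSpan S :=
  Submodule.subset_span.trans (Submodule.le_topologicalClosure _)

theorem isClosed_closedSpan (S : Set L) : IsClosed (closedSpan S : Set L) :=
  Submodule.isClosed_topologicalClosure _

theorem closedSpan_le {S : Set L} {N : Submodule ℂ L} (hN : IsClosed (N : Set L))
    (h : S ⊆ N) : closedSpan S ≤ N :=
  Submodule.topologicalClosure_minimal _ (Submodule.span_le.mpr h) hN

theorem closedSpan_mono {S T : Set L} (h : S ⊆ T) : closedSpan S ≤ closedSpan T :=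
  Submodule.topologicalClosure_mono (Submodule.span_mono h)

theorem map_mem_of_mem_closedSpan (f : L →L[ℂ] L) {S : Set L} {N : Submodule ℂ L}
    (hN : IsClosed (N : Set L)) (h : ∀ s ∈ S, f s ∈ N) {x : L} (hx : x ∈ closedSpan S) :
    f x ∈ N :=
  closedSpan_le (N := N.comap (f : L →ₗ[ℂ] L)) (hN.preimage f.continuous) h hx

theorem star_mem_closedSpan [StarRing L] [StarModule ℂ L] [ContinuousStar L] {S : Set L}
    {x : L} (hx : x ∈ closedSpan S) : star x ∈ closedSpan (star '' S) := by
  have hspan : Set.MapsTo star (Submodule.span ℂ S : Set L) (Submodule.span ℂ (star '' S)) :=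
    fun y hy => Submodule.image_span_subset_span (starLinearEquiv ℂ (A := L)).toLinearMap S
      ⟨y, hy, rfl⟩
  rw [closedSpan, ← SetLike.mem_coe, Submodule.topologicalClosure_coe] at hx ⊢
  exact map_mem_closure continuous_star hx hspan

theorem mul_mem_mulSpan {S T : Set L} {s t : L} (hs : s ∈ S) (ht : t ∈ T) :
    s * t ∈ mulSpan S T :=
  subset_closedSpan _ (Set.mem_image2_of_mem hs ht)

theorem isClosed_mulSpan (S T : Set L) : IsClosed (mulSpan S T : Set L) :=
  isClosed_closedSpan _

theorem mulSpan_le {S T : Set L} {N : Submodule ℂ L} (hN : IsClosed (N : Set L))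
    (h : ∀ s ∈ S, ∀ t ∈ T, s * t ∈ N) : mulSpan S T ≤ N :=
  closedSpan_le hN (Set.image2_subset_iff.mpr h)

theorem mulSpan_mono {S S' T T' : Set L} (hS : S ⊆ S') (hT : T ⊆ T') :
    mulSpan S T ≤ mulSpan S' T' :=
  closedSpan_mono (Set.image2_subset hS hT)

theorem mul_mem_of_mem_mulSpan_left {S T : Set L} {N : Submodule ℂ L}
    (hN : IsClosed (N : Set L)) {u : L} (h : ∀ s ∈ S, ∀ t ∈ T, s * t * u ∈ N) {x : L}
    (hx : x ∈ mulSpan S T) : x * u ∈ N :=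
  map_mem_of_mem_closedSpan ((ContinuousLinearMap.mul ℂ L).flip u) hN
    (Set.forall_mem_image2.mpr h) hx

theorem mul_mem_of_mem_mulSpan_right {S T : Set L} {N : Submodule ℂ L}
    (hN : IsClosed (N : Set L)) {u : L} (h : ∀ s ∈ S, ∀ t ∈ T, u * (s * t) ∈ N) {x : L}
    (hx : x ∈ mulSpan S T) : u * x ∈ N :=
  map_mem_of_mem_closedSpan (ContinuousLinearMap.mul ℂ L u) hN
    (Set.forall_mem_image2.mpr h) hx

theorem star_mem_mulSpan [StarRing L] [StarModule ℂ L] [ContinuousStar L] {S T : Set L}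
    {x : L} (hx : x ∈ mulSpan S T) : star x ∈ mulSpan (star '' T) (star '' S) := by
  refine closedSpan_mono ?_ (star_mem_closedSpan hx)
  rintro _ ⟨_, ⟨s, hs, t, ht, rfl⟩, rfl⟩
  exact star_mul s t ▸ Set.mem_image2_of_mem (Set.mem_image_of_mem _ ht) (Set.mem_image_of_mem _ hs)

end ClosedSpan

structure IsConcreteFellBundle {G L : Type*} [Group G] [NormedRing L] [StarRing L]
    [NormedAlgebra ℂ L] (B : G → Submodule ℂ L) : Prop where
  isClosed : ∀ t, IsClosed (B t : Set L)
  mul_mem : ∀ r s, ∀ b ∈ B r, ∀ c ∈ B s, b * c ∈ B (r * s)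
  star_mem : ∀ t, ∀ b ∈ B t, star b ∈ B t⁻¹

noncomputable def fiberIdeal {G L : Type*} [Group G] [NormedRing L] [StarRing L]
    [NormedAlgebra ℂ L] (B : G → Submodule ℂ L) (r s : G) : Submodule ℂ L :=
  mulSpan (mulSpan (B r : Set L) (B s : Set L) : Set L)
    (star '' (mulSpan (B r : Set L) (B s : Set L) : Set L))

namespace IsConcreteFellBundle

variable {G L : Type*} [Group G]

section Algebraic

variable [NormedRing L] [StarRing L] [NormedAlgebra ℂ L] {B : G → Submodule ℂ L}
  (hB : IsConcreteFellBundle B)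
include hB

theorem mul_mem_of_mul_eq {r s t : G} {x y : L} (hx : x ∈ B r) (hy : y ∈ B s)
    (h : r * s = t) : x * y ∈ B t :=
  h ▸ hB.mul_mem r s x hx y hy

theorem mulSpan_le_fiber (r s : G) : mulSpan (B r : Set L) (B s : Set L) ≤ B (r * s) :=
  mulSpan_le (hB.isClosed _) (hB.mul_mem r s)

theorem mulSpan_mul_mem {r s : G} {x e : L} (hx : x ∈ mulSpan (B r : Set L) (B s : Set L))
    (he : e ∈ B 1) : x * e ∈ mulSpan (B r : Set L) (B s : Set L) :=
  mul_mem_of_mem_mulSpan_left (isClosed_mulSpan _ _) (fun b hb c hc =>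
    mul_assoc b c e ▸ mul_mem_mulSpan hb (hB.mul_mem_of_mul_eq hc he (mul_one s))) hx

theorem mul_mulSpan_mem {r s : G} {x e : L} (he : e ∈ B 1)
    (hx : x ∈ mulSpan (B r : Set L) (B s : Set L)) :
    e * x ∈ mulSpan (B r : Set L) (B s : Set L) :=
  mul_mem_of_mem_mulSpan_right (isClosed_mulSpan _ _) (fun b hb c hc =>
    (mul_assoc e b c).symm ▸ mul_mem_mulSpan (hB.mul_mem_of_mul_eq he hb (one_mul r)) hc) hx

theorem mulSpan_fiberIdeal_le (r s : G) :
    mulSpan (fiberIdeal B r s : Set L) (B (r * s) : Set L) ≤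
      mulSpan (B r : Set L) (B s : Set L) := by
  refine mulSpan_le (isClosed_mulSpan _ _) fun j hj v hv => ?_
  refine mul_mem_of_mem_mulSpan_left (isClosed_mulSpan _ _) ?_ hj
  rintro p hp _ ⟨y, hy, rfl⟩
  rw [mul_assoc]
  exact hB.mulSpan_mul_mem hp <| hB.mul_mem_of_mul_eq
    (hB.star_mem _ y (hB.mulSpan_le_fiber r s hy)) hv (inv_mul_cancel _)

end Algebraic

section Star

variable [NormedRing L] [StarRing L] [NormedAlgebra ℂ L] [StarModule ℂ L] [ContinuousStar L]
  {B : G → Submodule ℂ L} (hB : IsConcreteFellBundle B)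
include hB

theorem star_mem_mulSpan_inv {r s : G} {x : L} (hx : x ∈ mulSpan (B r : Set L) (B s : Set L)) :
    star x ∈ mulSpan (B s⁻¹ : Set L) (B r⁻¹ : Set L) :=
  mulSpan_mono (Set.image_subset_iff.mpr (hB.star_mem s))
    (Set.image_subset_iff.mpr (hB.star_mem r)) (star_mem_mulSpan hx)

theorem mulSpan_fiber_fiberIdeal_le (r s : G) :
    mulSpan (B (r * s) : Set L) (fiberIdeal B s⁻¹ r⁻¹ : Set L) ≤
      mulSpan (B r : Set L) (B s : Set L) := by
  refine mulSpan_le (isClosed_mulSpan _ _) fun v hv j hj => ?_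
  refine mul_mem_of_mem_mulSpan_right (isClosed_mulSpan _ _) ?_ hj
  rintro p hp _ ⟨y, hy, rfl⟩
  rw [← mul_assoc]
  have hy' : star y ∈ mulSpan (B r : Set L) (B s : Set L) := by
    simpa only [inv_inv] using hB.star_mem_mulSpan_inv hy
  exact hB.mul_mulSpan_mem (hB.mul_mem_of_mul_eq hv (hB.mulSpan_le_fiber _ _ hp) (by group)) hy'

end Star

section CStar

variable [CStarAlgebra L] {B : G → Submodule ℂ L} (hB : IsConcreteFellBundle B)
include hB

theorem mul_mem_of_mem_adjoin_star_mul_self {t : G} {x c : L} (hx : x ∈ B t)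
    (hc : c ∈ Algebra.adjoin ℂ {star x * x}) : x * c ∈ B t :=
  (B t).mul_mem_of_mem_adjoin_singleton (fun _ hy => hB.mul_mem_of_mul_eq hy
    (hB.mul_mem_of_mul_eq (hB.star_mem t x hx) hx (inv_mul_cancel t)) (mul_one t)) hx hc

theorem mulSpan_le_mulSpan_fiberIdeal (r s : G) :
    mulSpan (B r : Set L) (B s : Set L) ≤
      mulSpan (fiberIdeal B r s : Set L) (B (r * s) : Set L) := by
  intro x hx
  refine CStarAlgebra.mem_of_forall_mul_star_mul_self_mul_mem (isClosed_mulSpan _ _)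
    fun c hc => ?_
  rw [show x * (star x * x * c) = x * star x * (x * c) by simp only [mul_assoc]]
  exact mul_mem_mulSpan (mul_mem_mulSpan hx ⟨x, hx, rfl⟩)
    (hB.mul_mem_of_mem_adjoin_star_mul_self (hB.mulSpan_le_fiber r s hx) hc)

theorem mulSpan_le_mulSpan_fiber_fiberIdeal (r s : G) :
    mulSpan (B r : Set L) (B s : Set L) ≤
      mulSpan (B (r * s) : Set L) (fiberIdeal B s⁻¹ r⁻¹ : Set L) := by
  intro x hx
  refine CStarAlgebra.mem_of_forall_mul_star_mul_self_mul_mem (isClosed_mulSpan _ _)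
    fun c hc => ?_
  have hcomm : Commute (star x * x) c :=
    Algebra.commute_of_mem_adjoin_singleton_of_commute hc (Commute.refl _)
  have hx' := hB.star_mem_mulSpan_inv hx
  rw [hcomm.eq, ← mul_assoc]
  exact mul_mem_mulSpan
    (hB.mul_mem_of_mem_adjoin_star_mul_self (hB.mulSpan_le_fiber r s hx) hc)
    (mul_mem_mulSpan hx' ⟨star x, hx', star_star x⟩)

end CStar

end IsConcreteFellBundle

/-- For a concrete Fell bundle `(B t)` and `J r s := (B r ⋅ B s) ⋅ (B r ⋅ B s)*`, one has
`B r ⋅ B s = J r s ⋅ B (r*s) = B (r*s) ⋅ J s⁻¹ r⁻¹`. -/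
theorem fellBundle_mulSpan_eq_ideal_mul
    {G L : Type*} [Group G] [NormedRing L] [StarRing L] [CStarRing L]
    [NormedAlgebra ℂ L] [StarModule ℂ L] [CompleteSpace L]
    (B : G → Submodule ℂ L)
    (hclosed : ∀ t : G, IsClosed (B t : Set L))
    (hmul : ∀ r s : G, ∀ b ∈ B r, ∀ c ∈ B s, b * c ∈ B (r * s))
    (hstar : ∀ t : G, ∀ b ∈ B t, star b ∈ B t⁻¹)
    (J : G → G → Submodule ℂ L)
    (hJ : ∀ r s : G, J r s
      = mulSpan (mulSpan (B r : Set L) (B s : Set L) : Set L)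
          (star '' (mulSpan (B r : Set L) (B s : Set L) : Set L))) :
    ∀ r s : G,
      mulSpan (B r : Set L) (B s : Set L)
          = mulSpan (J r s : Set L) (B (r * s) : Set L)
        ∧ mulSpan (B r : Set L) (B s : Set L)
          = mulSpan (B (r * s) : Set L) (J s⁻¹ r⁻¹ : Set L) := by
  let : CStarAlgebra L := { ‹NormedRing L›, ‹StarRing L›, ‹CStarRing L›, ‹NormedAlgebra ℂ L›,
    ‹StarModule ℂ L›, ‹CompleteSpace L› with }
  have hB : IsConcreteFellBundle B := ⟨hclosed, hmul, hstar⟩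
  obtain rfl : J = fiberIdeal B := funext₂ hJ
  exact fun r s =>
    ⟨(hB.mulSpan_le_mulSpan_fiberIdeal r s).antisymm (hB.mulSpan_fiberIdeal_le r s),
      (hB.mulSpan_le_mulSpan_fiber_fiberIdeal r s).antisymm (hB.mulSpan_fiber_fiberIdeal_le r s)⟩
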